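/- Let H ∈ (1/2, 1) and 0 < z < v. Then ∫₀^z u^{1−2H} (z−u)^{H−3/2} (v−u)^{H−3/2} du = B(2−2H, H−1/2) · v^{1/2−H} z^{1/2−H} (v−z)^{2H−2}, where B denotes the Beta function. -/

import Mathlib

/-!
The Möbius substitution `u = z v t / (z t + v - z)`, sending `0, 1, ∞` to `0, z, v`, gives
`z - u = z (v - z) (1 - t) / D`, `v - u = v (v - z) / D` and `du = z v (v - z) / D² dt` with
`D = z t + v - z`. With exponents `a - 1`, `b - 1`, `-(a + b)` (here `a = 2 - 2H`,
`b = H - 1/2`) every power of `D` cancels, leaving a constant times the Beta integral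
`∫₀¹ t^(a-1) (1-t)^(b-1) dt = B(a, b)`.
-/

open Real MeasureTheory Set ProbabilityTheory

theorem integral_rpow_mul_one_sub_rpow {a b : ℝ} (ha : 0 < a) (hb : 0 < b) :
    ∫ t in (0 : ℝ)..1, t ^ (a - 1) * (1 - t) ^ (b - 1) = beta a b := by
  apply Complex.ofReal_injective
  rw [← intervalIntegral.integral_ofReal, beta, Complex.ofReal_div, Complex.ofReal_mul,
    ← Complex.Gamma_ofReal, ← Complex.Gamma_ofReal, ← Complex.Gamma_ofReal,
    Complex.ofReal_add,
    ← Complex.betaIntegral_eq_Gamma_mul_div _ _ (by simpa) (by simpa)]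
  refine intervalIntegral.integral_congr fun t ht => ?_
  rw [uIcc_of_le zero_le_one] at ht
  push_cast
  rw [Complex.ofReal_cpow ht.1, Complex.ofReal_cpow (sub_nonneg.2 ht.2)]
  push_cast
  rfl

lemma div_rpow_mul_div_rpow_mul_div_rpow {x y w k D p q r : ℝ} (hx : 0 ≤ x) (hy : 0 ≤ y)
    (hw : 0 ≤ w) (hD : 0 < D) (hpqr : p + q + r = -2) :
    (x / D) ^ p * (y / D) ^ q * (w / D) ^ r * (k / D ^ 2) = x ^ p * y ^ q * w ^ r * k := by
  have hD' : D ^ p * D ^ q * D ^ r * D ^ 2 = 1 := by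
    rw [← rpow_add hD, ← rpow_add hD, hpqr, ← rpow_natCast, ← rpow_add hD]
    norm_num
  calc (x / D) ^ p * (y / D) ^ q * (w / D) ^ r * (k / D ^ 2)
      = x ^ p * y ^ q * w ^ r * k / (D ^ p * D ^ q * D ^ r * D ^ 2) := by
        rw [div_rpow hx hD.le, div_rpow hy hD.le, div_rpow hw hD.le]
        ring
    _ = x ^ p * y ^ q * w ^ r * k := by rw [hD', div_one]

noncomputable def moebiusSubst (z v t : ℝ) : ℝ := z * v * t / (z * t + (v - z))

section moebiusSubst

variable {z v t : ℝ}

lemma hasDerivAt_moebiusSubst (ht : z * t + (v - z) ≠ 0) :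
    HasDerivAt (moebiusSubst z v) (z * v * (v - z) / (z * t + (v - z)) ^ 2) t := by
  have hnum : HasDerivAt (fun t => z * v * t) (z * v) t := by
    simpa using (hasDerivAt_id t).const_mul (z * v)
  have hden : HasDerivAt (fun t => z * t + (v - z)) z t := by
    simpa using ((hasDerivAt_id t).const_mul z).add_const (v - z)
  exact (hnum.div hden ht).congr_deriv (by ring)

lemma left_sub_moebiusSubst (ht : z * t + (v - z) ≠ 0) :
    z - moebiusSubst z v t = z * (v - z) * (1 - t) / (z * t + (v - z)) := by
  rw [moebiusSubst]
  field_simp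
  ring

lemma right_sub_moebiusSubst (ht : z * t + (v - z) ≠ 0) :
    v - moebiusSubst z v t = v * (v - z) / (z * t + (v - z)) := by
  rw [moebiusSubst]
  field_simp
  ring

variable (hz : 0 < z) (hzv : z < v)
include hz hzv

lemma moebiusSubst_denom_pos (ht : t ∈ Ioo (0 : ℝ) 1) : 0 < z * t + (v - z) := by
  nlinarith [ht.1]

lemma injOn_moebiusSubst : InjOn (moebiusSubst z v) (Ioo 0 1) := by
  intro s hs t ht hst
  rw [moebiusSubst, moebiusSubst, div_eq_div_iff (moebiusSubst_denom_pos hz hzv hs).ne'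
    (moebiusSubst_denom_pos hz hzv ht).ne'] at hst
  have hcross : z * v * (v - z) * (s - t) = 0 := by linear_combination hst
  have hc : z * v * (v - z) ≠ 0 := by have := hz.trans hzv; have := sub_pos.2 hzv; positivity
  linarith [(mul_eq_zero.mp hcross).resolve_left hc]

lemma moebiusSubst_image_Ioo : moebiusSubst z v '' Ioo 0 1 = Ioo 0 z := by
  have hv := hz.trans hzv
  have hvz := sub_pos.2 hzv
  ext u
  constructor
  · rintro ⟨t, ht, rfl⟩
    have hD := moebiusSubst_denom_pos hz hzv ht
    refine ⟨div_pos (by have := ht.1; positivity) hD, sub_pos.1 ?_⟩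
    rw [left_sub_moebiusSubst hD.ne']
    have := sub_pos.2 ht.2
    positivity
  · rintro ⟨hu0, huz⟩
    have hvu : 0 < v - u := by linarith
    refine ⟨u * (v - z) / (z * (v - u)), ⟨by positivity, ?_⟩, ?_⟩
    · rw [div_lt_one (by positivity)]
      nlinarith
    · have hD : z * (u * (v - z) / (z * (v - u))) + (v - z) = v * (v - z) / (v - u) := by
        field_simp
        ring
      rw [moebiusSubst, hD]
      field_simp

lemma abs_deriv_smul_integrand_moebiusSubst {a b : ℝ} (ht : t ∈ Ioo (0 : ℝ) 1) :
    |z * v * (v - z) / (z * t + (v - z)) ^ 2| •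
        (moebiusSubst z v t ^ (a - 1) * (z - moebiusSubst z v t) ^ (b - 1) *
          (v - moebiusSubst z v t) ^ (-(a + b)))
      = z ^ (a + b - 1) * v ^ (-b) * (v - z) ^ (-a) * (t ^ (a - 1) * (1 - t) ^ (b - 1)) := by
  have hv := hz.trans hzv
  have hvz := sub_pos.2 hzv
  have ht0 := ht.1
  have ht1 := sub_pos.2 ht.2
  have hD := moebiusSubst_denom_pos hz hzv ht
  rw [smul_eq_mul, abs_of_pos (by positivity), left_sub_moebiusSubst hD.ne',
    right_sub_moebiusSubst hD.ne', moebiusSubst, mul_comm,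
    div_rpow_mul_div_rpow_mul_div_rpow (by positivity) (by positivity) (by positivity) hD
      (by ring),
    show a + b - 1 = (a - 1) + (b - 1) + 1 by ring, show -b = (a - 1) + -(a + b) + 1 by ring,
    show -a = (b - 1) + -(a + b) + 1 by ring]
  simp (disch := positivity) only [mul_rpow, rpow_add, rpow_one]
  ring

end moebiusSubst

theorem integral_rpow_mul_sub_rpow_mul_sub_rpow_eq_beta {a b z v : ℝ} (ha : 0 < a) (hb : 0 < b)
    (hz : 0 < z) (hzv : z < v) :
    ∫ u in (0 : ℝ)..z, u ^ (a - 1) * (z - u) ^ (b - 1) * (v - u) ^ (-(a + b))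
      = beta a b * z ^ (a + b - 1) * v ^ (-b) * (v - z) ^ (-a) := by
  rw [intervalIntegral.integral_of_le hz.le, integral_Ioc_eq_integral_Ioo,
    ← moebiusSubst_image_Ioo hz hzv,
    integral_image_eq_integral_abs_deriv_smul measurableSet_Ioo
      (fun t ht =>
        (hasDerivAt_moebiusSubst (moebiusSubst_denom_pos hz hzv ht).ne').hasDerivWithinAt)
      (injOn_moebiusSubst hz hzv),
    setIntegral_congr_fun measurableSet_Ioo
      fun t ht => abs_deriv_smul_integrand_moebiusSubst hz hzv ht,
    integral_const_mul, ← integral_Ioc_eq_integral_Ioo,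
    ← intervalIntegral.integral_of_le zero_le_one, integral_rpow_mul_one_sub_rpow ha hb]
  ring

theorem stmt11 (H z v : ℝ) (hH : 1 / 2 < H) (hH1 : H < 1)
    (hz : 0 < z) (hzv : z < v) :
    ∫ u in (0 : ℝ)..z, u ^ (1 - 2 * H) * (z - u) ^ (H - 3 / 2) * (v - u) ^ (H - 3 / 2)
      = (Real.Gamma (2 - 2 * H) * Real.Gamma (H - 1 / 2) / Real.Gamma (3 / 2 - H))
        * v ^ (1 / 2 - H) * z ^ (1 / 2 - H) * (v - z) ^ (2 * H - 2) := by
  have hbeta := integral_rpow_mul_sub_rpow_mul_sub_rpow_eq_beta (a := 2 - 2 * H) (b := H - 1 / 2)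
    (by linarith) (by linarith) hz hzv
  rw [beta, show 2 - 2 * H - 1 = 1 - 2 * H by ring, show H - 1 / 2 - 1 = H - 3 / 2 by ring,
    show 2 - 2 * H + (H - 1 / 2) = 3 / 2 - H by ring, show -(3 / 2 - H) = H - 3 / 2 by ring,
    show 3 / 2 - H - 1 = 1 / 2 - H by ring, show -(H - 1 / 2) = 1 / 2 - H by ring,
    show -(2 - 2 * H) = 2 * H - 2 by ring] at hbeta
  rw [hbeta]
  ring
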